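/- arXiv:2603.21691 — 4 statements merged into one kernel-verified Lean document; each statement's English description precedes it below -/
import Mathlib

section
/- In a nonatomic routing game with strictly increasing, continuous link cost functions, if q and q' are two Wardrop equilibria then they induce the same link flows: z_l(q) = z_l(q') for every link l, and hence the same total social cost. -/
/-!
At an equilibrium `q` every used path has minimal cost, so `q` minimises the linear functional
`v ↦ ∑ₚ vₚ Costₚ(q)` over feasible flows. Writing this for `q` against `q'` and for `q'` against
`q`, switching from path to link sums and adding gives
`∑ₗ (zₗ(q) - zₗ(q')) (fₗ(zₗ(q)) - fₗ(zₗ(q'))) ≤ 0`; strict monotonicity makes every term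
nonnegative and positive unless `zₗ(q) = zₗ(q')`.
-/

open Finset

open scoped Classical

theorem sum_mul_le_sum_mul_of_support_argmin {ι : Type*} [Fintype ι] {c u v : ι → ℝ}
    (hu : ∀ i, 0 ≤ u i) (hv : ∀ i, 0 ≤ v i) (huv : ∑ i, u i = ∑ i, v i)
    (hmin : ∀ i, 0 < u i → ∀ j, c i ≤ c j) :
    ∑ i, u i * c i ≤ ∑ i, v i * c i := by
  cases isEmpty_or_nonempty ι
  · simp
  obtain ⟨i₀, hi₀⟩ := Finite.exists_min c
  have hu_const : ∀ i, u i * c i = u i * c i₀ := fun i =>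
    (hu i).eq_or_lt.elim (fun h => by simp [← h])
      (fun h => by rw [le_antisymm (hmin i h i₀) (hi₀ i)])
  calc ∑ i, u i * c i = ∑ i, u i * c i₀ := sum_congr rfl fun i _ => hu_const i
    _ = ∑ i, v i * c i₀ := by rw [← sum_mul, huv, sum_mul]
    _ ≤ ∑ i, v i * c i := sum_le_sum fun i _ => mul_le_mul_of_nonneg_left (hi₀ i) (hv i)

theorem sum_mul_sum_eq_sum_sum_filter_mul {A P : Type*} [Fintype A] [Fintype P]
    (uses : P → Finset A) (w : P → ℝ) (g : A → ℝ) :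
    ∑ p, w p * ∑ l ∈ uses p, g l = ∑ l, (∑ p ∈ univ.filter fun p => l ∈ uses p, w p) * g l := by
  simp only [mul_sum, sum_mul]
  exact sum_comm' fun p l => by simp

theorem StrictMono.sub_mul_sub_pos {g : ℝ → ℝ} (hg : StrictMono g) {x y : ℝ} (h : x ≠ y) :
    0 < (x - y) * (g x - g y) := by
  rcases h.lt_or_gt with h | h
  · exact mul_pos_of_neg_of_neg (sub_neg.2 h) (sub_neg.2 (hg h))
  · exact mul_pos (sub_pos.2 h) (sub_pos.2 (hg h))

theorem eq_of_sum_sub_mul_sub_nonpos {ι : Type*} [Fintype ι] {g : ι → ℝ → ℝ}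
    (hg : ∀ i, StrictMono (g i)) {x y : ι → ℝ}
    (h : ∑ i, (x i - y i) * (g i (x i) - g i (y i)) ≤ 0) : x = y := by
  by_contra hne
  obtain ⟨i, hi⟩ := Function.ne_iff.1 hne
  have hpos : 0 < ∑ i, (x i - y i) * (g i (x i) - g i (y i)) :=
    sum_pos' (fun j _ => (eq_or_ne (x j) (y j)).elim (fun h => by simp [h])
      (fun h => ((hg j).sub_mul_sub_pos h).le)) ⟨i, mem_univ i, (hg i).sub_mul_sub_pos hi⟩
  linarith

theorem wardrop_equilibria_same_link_flows_general {A P : Type*} [Fintype A] [Fintype P]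
    (uses : P → Finset A) (f : A → ℝ → ℝ)
    (hfm : ∀ l, StrictMono (f l))
    (γ : ℝ)
    (z : (P → ℝ) → A → ℝ)
    (hz : ∀ q l, z q l = ∑ p ∈ Finset.univ.filter fun p => l ∈ uses p, q p)
    (Cost : (P → ℝ) → P → ℝ)
    (hCost : ∀ q p, Cost q p = ∑ l ∈ uses p, f l (z q l))
    (q q' : P → ℝ)
    (hq : ∀ p, 0 ≤ q p) (hq1 : ∑ p, q p = γ)
    (hq' : ∀ p, 0 ≤ q' p) (hq1' : ∑ p, q' p = γ)
    (hW : ∀ p, 0 < q p → ∀ p'', Cost q p ≤ Cost q p'')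
    (hW' : ∀ p, 0 < q' p → ∀ p'', Cost q' p ≤ Cost q' p'') :
    (∀ l, z q l = z q' l) ∧
      ∑ l, z q l * f l (z q l) = ∑ l, z q' l * f l (z q' l) := by
  have path_to_link : ∀ w u, ∑ p, w p * Cost u p = ∑ l, z w l * f l (z u l) := fun w u => by
    simp only [hCost, hz]
    exact sum_mul_sum_eq_sum_sum_filter_mul uses w _
  have hvi := sum_mul_le_sum_mul_of_support_argmin hq hq' (hq1.trans hq1'.symm) hW
  have hvi' := sum_mul_le_sum_mul_of_support_argmin hq' hq (hq1'.trans hq1.symm) hW'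
  rw [path_to_link, path_to_link] at hvi hvi'
  have hmono : ∑ l, (z q l - z q' l) * (f l (z q l) - f l (z q' l)) ≤ 0 := by
    have hexpand : ∑ l, (z q l - z q' l) * (f l (z q l) - f l (z q' l)) =
        (∑ l, z q l * f l (z q l) - ∑ l, z q' l * f l (z q l)) +
          (∑ l, z q' l * f l (z q' l) - ∑ l, z q l * f l (z q' l)) := by
      simp only [← sum_sub_distrib, ← sum_add_distrib]
      exact sum_congr rfl fun l _ => by ring
    linarith
  have hzeq : ∀ l, z q l = z q' l := congrFun (eq_of_sum_sub_mul_sub_nonpos hfm hmono)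
  exact ⟨hzeq, by simp only [hzeq]⟩

/-- Essential uniqueness of Wardrop equilibria: with continuous, strictly increasing
link cost functions, any two Wardrop equilibria of a single-commodity nonatomic
routing game induce the same link flows and hence the same total social cost. -/
theorem wardrop_equilibria_same_link_flows {A P : Type*} [Fintype A] [Fintype P]
    (uses : P → Finset A) (f : A → ℝ → ℝ)
    (hfc : ∀ l, Continuous (f l)) (hfm : ∀ l, StrictMono (f l))
    (γ : ℝ) (hγ : 0 < γ)
    (z : (P → ℝ) → A → ℝ)
    (hz : ∀ q l, z q l = ∑ p ∈ Finset.univ.filter fun p => l ∈ uses p, q p)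
    (Cost : (P → ℝ) → P → ℝ)
    (hCost : ∀ q p, Cost q p = ∑ l ∈ uses p, f l (z q l))
    (q q' : P → ℝ)
    (hq : ∀ p, 0 ≤ q p) (hq1 : ∑ p, q p = γ)
    (hq' : ∀ p, 0 ≤ q' p) (hq1' : ∑ p, q' p = γ)
    (hW : ∀ p, 0 < q p → ∀ p'', Cost q p ≤ Cost q p'')
    (hW' : ∀ p, 0 < q' p → ∀ p'', Cost q' p ≤ Cost q' p'') :
    (∀ l, z q l = z q' l) ∧
      ∑ l, z q l * f l (z q l) = ∑ l, z q' l * f l (z q' l) :=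
  wardrop_equilibria_same_link_flows_general uses f hfm γ z hz Cost hCost q q' hq hq1 hq' hq1' hW
    hW'
end

section
/- A Wardrop equilibrium exists in every nonatomic routing game with a finite, nonempty path set, fixed positive demand, and continuous nondecreasing link cost functions. -/
open scoped Classical

/-!
The Beckmann potential `Φ(q) = ∑ₗ ∫₀^{zₗ(q)} fₗ` is differentiable, and its partial derivative
in the direction of a path `p` is the cost of `p`. A minimizer of `Φ` over the compact, convex set
of feasible flows exists; moving mass from a used path `p` towards any path `p'` is a feasible
direction there, so first-order optimality gives `C_p(q) ≤ C_{p'}(q)`.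
-/

noncomputable section

namespace Routing

open Finset

variable {A P : Type*} [Fintype P]

def flowSet (γ : ℝ) : Set (P → ℝ) := {q | (∀ p, 0 ≤ q p) ∧ ∑ p, q p = γ}

theorem flowSet_subset_pi_Icc (γ : ℝ) : flowSet γ ⊆ Set.univ.pi fun _ : P => Set.Icc 0 γ :=
  fun _ hq p _ => ⟨hq.1 p, hq.2 ▸ single_le_sum (fun p _ => hq.1 p) (mem_univ p)⟩

theorem isClosed_flowSet (γ : ℝ) : IsClosed (flowSet γ : Set (P → ℝ)) := by
  rw [flowSet, Set.ofPred_and, Set.ofPred_forall]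
  exact (isClosed_iInter fun p => isClosed_le continuous_const (continuous_apply p)).inter
    (isClosed_eq (continuous_finsetSum _ fun p _ => continuous_apply p) continuous_const)

theorem isCompact_flowSet (γ : ℝ) : IsCompact (flowSet γ : Set (P → ℝ)) :=
  (isCompact_univ_pi fun _ => isCompact_Icc).of_isClosed_subset (isClosed_flowSet γ)
    (flowSet_subset_pi_Icc γ)

theorem flowSet_nonempty [Nonempty P] {γ : ℝ} (hγ : 0 ≤ γ) : (flowSet γ : Set (P → ℝ)).Nonempty :=
  ⟨fun _ => γ / Fintype.card P, fun _ => by positivity, by simp [card_univ]; field_simp⟩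

theorem convex_flowSet (γ : ℝ) : Convex ℝ (flowSet γ : Set (P → ℝ)) := by
  intro x hx y hy a b ha hb hab
  refine ⟨fun p => ?_, ?_⟩
  · have := hx.1 p; have := hy.1 p
    simp only [Pi.add_apply, Pi.smul_apply, smul_eq_mul]
    positivity
  · simp only [Pi.add_apply, Pi.smul_apply, smul_eq_mul, sum_add_distrib, ← mul_sum, hx.2, hy.2]
    rw [← add_mul, hab, one_mul]

section Potential

variable (uses : P → Finset A) (f : A → ℝ → ℝ)

def linkLoad (l : A) : (P → ℝ) →L[ℝ] ℝ :=
  ∑ p ∈ univ.filter fun p => l ∈ uses p, ContinuousLinearMap.proj p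

theorem linkLoad_apply (l : A) (q : P → ℝ) :
    linkLoad uses l q = ∑ p ∈ univ.filter fun p => l ∈ uses p, q p := by
  simp [linkLoad]

def pathCost (q : P → ℝ) (p : P) : ℝ := ∑ l ∈ uses p, f l (linkLoad uses l q)

variable [Fintype A]

def beckmannPotential (q : P → ℝ) : ℝ := ∑ l, ∫ t in (0 : ℝ)..linkLoad uses l q, f l t

def beckmannFDeriv (q : P → ℝ) : (P → ℝ) →L[ℝ] ℝ := ∑ l, f l (linkLoad uses l q) • linkLoad uses l

variable {f}

theorem hasFDerivAt_beckmannPotential (hf : ∀ l, Continuous (f l)) (q : P → ℝ) :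
    HasFDerivAt (beckmannPotential uses f) (beckmannFDeriv uses f q) q := by
  unfold beckmannPotential beckmannFDeriv
  refine HasFDerivAt.fun_sum fun l _ => ?_
  exact ((hf l).integral_hasStrictDerivAt 0 _).hasDerivAt.comp_hasFDerivAt q
    (linkLoad uses l).hasFDerivAt

theorem continuous_beckmannPotential (hf : ∀ l, Continuous (f l)) :
    Continuous (beckmannPotential uses f) :=
  continuous_iff_continuousAt.2 fun q => (hasFDerivAt_beckmannPotential uses hf q).continuousAt

end Potential

section MovingMass

variable [DecidableEq P]

theorem add_smul_single_sub_single_mem_flowSet {γ t : ℝ} {q : P → ℝ} (hq : q ∈ flowSet γ)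
    {p : P} (ht : 0 ≤ t) (htq : t ≤ q p) (p' : P) :
    q + t • (Pi.single p' 1 - Pi.single p 1) ∈ flowSet γ := by
  refine ⟨fun r => ?_, ?_⟩
  · have := hq.1 r
    simp only [Pi.add_apply, Pi.smul_apply, Pi.sub_apply, Pi.single_apply, smul_eq_mul]
    split_ifs with h' h <;> subst_vars <;> linarith
  · simp [sum_add_distrib, ← mul_sum, hq.2]

theorem fderiv_single_le_of_isMinOn_flowSet {Φ : (P → ℝ) → ℝ} {Φ' : (P → ℝ) →L[ℝ] ℝ} {γ : ℝ}
    {q : P → ℝ} (hmin : IsMinOn Φ (flowSet γ) q) (hq : q ∈ flowSet γ) (hΦ : HasFDerivAt Φ Φ' q)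
    {p : P} (hp : 0 < q p) (p' : P) : Φ' (Pi.single p 1) ≤ Φ' (Pi.single p' 1) := by
  set d : P → ℝ := Pi.single p' 1 - Pi.single p 1
  have hmove : q + q p • d ∈ flowSet γ :=
    add_smul_single_sub_single_mem_flowSet hq hp.le le_rfl p'
  have hcone : q p • d ∈ posTangentConeAt (flowSet γ) q := by
    simpa using sub_mem_posTangentConeAt_of_segment_subset
      ((convex_flowSet γ).segment_subset hq hmove)
  have hslope : 0 ≤ q p * (Φ' (Pi.single p' 1) - Φ' (Pi.single p 1)) := by
    simpa [d] using hmin.localize.hasFDerivWithinAt_nonneg hΦ.hasFDerivWithinAt hcone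
  exact sub_nonneg.1 ((mul_nonneg_iff_of_pos_left hp).1 hslope)

variable (uses : P → Finset A) (f : A → ℝ → ℝ)

theorem linkLoad_single (l : A) (p : P) :
    linkLoad uses l (Pi.single p 1) = if l ∈ uses p then 1 else 0 := by
  simp [linkLoad_apply, Pi.single_apply, sum_ite_eq']

theorem beckmannFDeriv_single [Fintype A] (q : P → ℝ) (p : P) :
    beckmannFDeriv uses f q (Pi.single p 1) = pathCost uses f q p := by
  simp [beckmannFDeriv, pathCost, linkLoad_single]

end MovingMass

end Routing

end

theorem wardrop_equilibrium_exists_general {A P : Type*} [Fintype A] [Fintype P] [Nonempty P]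
    (uses : P → Finset A) (f : A → ℝ → ℝ)
    (hfc : ∀ l, Continuous (f l))
    (γ : ℝ) (hγ : 0 < γ)
    (z : (P → ℝ) → A → ℝ)
    (hz : ∀ q l, z q l = ∑ p ∈ Finset.univ.filter fun p => l ∈ uses p, q p)
    (Cost : (P → ℝ) → P → ℝ)
    (hCost : ∀ q p, Cost q p = ∑ l ∈ uses p, f l (z q l)) :
    ∃ q : P → ℝ, (∀ p, 0 ≤ q p) ∧ ∑ p, q p = γ ∧
      ∀ p, 0 < q p → ∀ p', Cost q p ≤ Cost q p' := by
  have hCost' : ∀ q p, Cost q p = Routing.pathCost uses f q p := by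
    simp [hCost, hz, Routing.pathCost, Routing.linkLoad_apply]
  obtain ⟨q, hq, hmin⟩ := (Routing.isCompact_flowSet γ).exists_isMinOn
    (Routing.flowSet_nonempty hγ.le) (Routing.continuous_beckmannPotential uses hfc).continuousOn
  refine ⟨q, hq.1, hq.2, fun p hp p' => ?_⟩
  have hle := Routing.fderiv_single_le_of_isMinOn_flowSet hmin hq
    (Routing.hasFDerivAt_beckmannPotential uses hfc q) hp p'
  simpa only [Routing.beckmannFDeriv_single, ← hCost'] using hle

/-- Existence of Wardrop equilibria: in every nonatomic routing game with a finite,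
nonempty path set, fixed positive demand, and continuous nondecreasing link costs,
a Wardrop equilibrium exists. -/
theorem wardrop_equilibrium_exists {A P : Type*} [Fintype A] [Fintype P] [Nonempty P]
    (uses : P → Finset A) (f : A → ℝ → ℝ)
    (hfc : ∀ l, Continuous (f l)) (hfm : ∀ l, Monotone (f l))
    (γ : ℝ) (hγ : 0 < γ)
    (z : (P → ℝ) → A → ℝ)
    (hz : ∀ q l, z q l = ∑ p ∈ Finset.univ.filter fun p => l ∈ uses p, q p)
    (Cost : (P → ℝ) → P → ℝ)
    (hCost : ∀ q p, Cost q p = ∑ l ∈ uses p, f l (z q l)) :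
    ∃ q : P → ℝ, (∀ p, 0 ≤ q p) ∧ ∑ p, q p = γ ∧
      ∀ p, 0 < q p → ∀ p', Cost q p ≤ Cost q p' :=
  wardrop_equilibrium_exists_general uses f hfc γ hγ z hz Cost hCost
end

section
/- For nonatomic routing with affine link costs f_l(z) = a_l z + b_l (a_l, b_l ≥ 0), the social cost of any Wardrop equilibrium is at most 4/3 times the minimum possible social cost. -/
open scoped Classical

lemma swap_sum_aux {A P : Type*} [Fintype A] [Fintype P]
    (uses : P → Finset A) (c : P → ℝ) (g : A → ℝ) :
    ∑ p, c p * ∑ l ∈ uses p, g l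
      = ∑ l, (∑ p ∈ Finset.univ.filter fun p => l ∈ uses p, c p) * g l := by
  have h1 : ∀ p : P, c p * ∑ l ∈ uses p, g l
      = ∑ l, if l ∈ uses p then c p * g l else 0 := by
    intro p
    rw [Finset.mul_sum, ← Finset.sum_filter, Finset.filter_univ_mem]
  simp_rw [h1]
  rw [Finset.sum_comm]
  refine Finset.sum_congr rfl fun l _ => ?_
  rw [Finset.sum_mul, Finset.sum_filter]

/-- Price of anarchy for affine link costs (Roughgarden–Tardos): the social cost of
any Wardrop equilibrium is at most `4/3` times the social cost of any feasible flow
with the same demand, in particular at most `4/3` times the optimum. -/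
theorem affine_price_of_anarchy {A P : Type*} [Fintype A] [Fintype P]
    (uses : P → Finset A) (a b : A → ℝ) (ha : ∀ l, 0 ≤ a l) (hb : ∀ l, 0 ≤ b l)
    (γ : ℝ) (hγ : 0 < γ)
    (z : (P → ℝ) → A → ℝ)
    (hz : ∀ q l, z q l = ∑ p ∈ Finset.univ.filter fun p => l ∈ uses p, q p)
    (Cost : (P → ℝ) → P → ℝ)
    (hCost : ∀ q p, Cost q p = ∑ l ∈ uses p, (a l * z q l + b l))
    (q : P → ℝ) (hq : ∀ p, 0 ≤ q p) (hq1 : ∑ p, q p = γ)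
    (hW : ∀ p, 0 < q p → ∀ p', Cost q p ≤ Cost q p')
    (q' : P → ℝ) (hq' : ∀ p, 0 ≤ q' p) (hq1' : ∑ p, q' p = γ) :
    ∑ l, z q l * (a l * z q l + b l) ≤
      (4 / 3) * ∑ l, z q' l * (a l * z q' l + b l) := by
  set F : A → ℝ := fun l => a l * z q l + b l with hF
  -- swap sums
  have hswap : ∀ c : P → ℝ, ∑ p, c p * Cost q p = ∑ l, (z (fun p => c p) l) * F l := by
    intro c
    have := swap_sum_aux uses c F
    simp_rw [hCost]
    rw [this]
    refine Finset.sum_congr rfl fun l _ => ?_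
    rw [hz]
  have hzq : ∀ c, z c = fun l => ∑ p ∈ Finset.univ.filter fun p => l ∈ uses p, c p := by
    intro c; funext l; exact hz c l
  -- existence of a used path
  have hex : ∃ p0, 0 < q p0 := by
    by_contra h
    push_neg at h
    have : ∀ p, q p = 0 := fun p => le_antisymm (h p) (hq p)
    rw [Finset.sum_congr rfl (fun p _ => this p)] at hq1
    simp at hq1
    linarith
  obtain ⟨p0, hp0⟩ := hex
  set L := Cost q p0 with hL
  have heqL : ∀ p, q p * Cost q p = q p * L := by
    intro p
    rcases lt_or_eq_of_le (hq p) with h | h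
    · have h1 := hW p h p0
      have h2 := hW p0 hp0 p
      rw [le_antisymm h1 h2]
    · rw [← h]; ring
  have hvar : ∑ l, z q l * F l ≤ ∑ l, z q' l * F l := by
    have e1 : ∑ p, q p * Cost q p = γ * L := by
      rw [Finset.sum_congr rfl (fun p _ => heqL p), ← Finset.sum_mul, hq1]
    have e2 : γ * L ≤ ∑ p, q' p * Cost q p := by
      calc γ * L = ∑ p, q' p * L := by rw [← Finset.sum_mul, hq1']
        _ ≤ ∑ p, q' p * Cost q p :=
          Finset.sum_le_sum fun p _ => mul_le_mul_of_nonneg_left (hW p0 hp0 p) (hq' p)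
    have := hswap q
    have := hswap q'
    calc ∑ l, z q l * F l = ∑ p, q p * Cost q p := (hswap q).symm
      _ = γ * L := e1
      _ ≤ ∑ p, q' p * Cost q p := e2
      _ = ∑ l, z q' l * F l := hswap q'
  -- nonnegativity of flows
  have hznn : ∀ l, 0 ≤ z q l := fun l => by
    rw [hz]; exact Finset.sum_nonneg fun p _ => hq p
  have hznn' : ∀ l, 0 ≤ z q' l := fun l => by
    rw [hz]; exact Finset.sum_nonneg fun p _ => hq' p
  -- key per-term inequality
  have hkey : ∑ l, z q' l * F l ≤
      (∑ l, z q' l * (a l * z q' l + b l)) + (1/4) * ∑ l, z q l * F l := by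
    rw [Finset.mul_sum, ← Finset.sum_add_distrib]
    refine Finset.sum_le_sum fun l _ => ?_
    have h1 := ha l
    have h2 := hb l
    have h3 := hznn l
    have h4 := hznn' l
    simp only [hF]
    nlinarith [sq_nonneg (z q' l - z q l / 2), mul_nonneg h2 h3]
  have hC : ∑ l, z q l * F l ≤
      (∑ l, z q' l * (a l * z q' l + b l)) + (1/4) * ∑ l, z q l * F l :=
    le_trans hvar hkey
  simp only [hF] at hC ⊢
  linarith
end

section
/- In a two-population nonatomic game where NCDs route r and EVs route extended paths p, with link cost on l equal to d_l(z_l + z⁰_l)/c_l (z_l, z⁰_l the EV and NCD link flows), the joint equilibrium conditions for both populations are equivalent to the first-order optimality (KKT) conditions of minimizing a single convex potential ∑_l d_l (z_l + z⁰_l)² / (2 c_l) + (λ₂/λ₁)∑_p q_p G_p-term + (λ₃/λ₁)∑_p q_p Y_p over the product of the two demand simplices, provided the station delay term G is such that the full potential is convex and differentiable. -/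
/-!
The potential is built so that its line derivative at `w` in a direction `v` is `λ₁⁻¹` times
the pairing of the current EV and NCD cost vectors with `v`. For a convex potential on the
convex set `K`, `w` is a minimizer iff this derivative is nonnegative towards every point of
`K`, i.e. iff `w` minimizes the linear functional given by the costs evaluated at `w`. As `K` is
a product of two simplices and this functional is a sum of one term per population, that splits
into one linear minimization per simplex, and a point minimizes a linear functional on a simplex
exactly when it puts mass only on cheapest coordinates: Wardrop's condition.
-/

open scoped Classical
open Finset Matrix

def IsWardrop {ι : Type*} (c x : ι → ℝ) : Prop :=
  ∀ i, 0 < x i → ∀ j, c i ≤ c j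

def scaledSimplex (ι : Type*) [Fintype ι] (γ : ℝ) : Set (ι → ℝ) :=
  {x | (∀ i, 0 ≤ x i) ∧ ∑ i, x i = γ}

section Simplex

variable {ι : Type*} [Fintype ι] {γ : ℝ} {c x : ι → ℝ}

theorem IsWardrop.isMinOn (h : IsWardrop c x) (hx : x ∈ scaledSimplex ι γ) :
    IsMinOn (c ⬝ᵥ ·) (scaledSimplex ι γ) x := by
  obtain ⟨hx0, hxγ⟩ := hx
  intro y ⟨hy0, hyγ⟩
  by_cases hused : ∃ i, 0 < x i
  · obtain ⟨i₀, hi₀⟩ := hused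
    have hcx : ∀ i, c i * x i = c i₀ * x i := fun i => by
      rcases (hx0 i).eq_or_lt with hi | hi
      · simp [← hi]
      · rw [le_antisymm (h i hi i₀) (h i₀ hi₀ i)]
    calc c ⬝ᵥ x = c i₀ * γ := by simp only [dotProduct, hcx, ← mul_sum, hxγ]
      _ = ∑ i, c i₀ * y i := by rw [← mul_sum, hyγ]
      _ ≤ c ⬝ᵥ y := sum_le_sum fun i _ => mul_le_mul_of_nonneg_right (h i₀ hi₀ i) (hy0 i)
  · simp only [not_exists, not_lt] at hused
    have hx : x = 0 := funext fun i => le_antisymm (hused i) (hx0 i)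
    have hy : y = 0 := funext fun i => by
      subst hx
      simp only [Pi.zero_apply, sum_const_zero] at hxγ
      exact (sum_eq_zero_iff_of_nonneg fun i _ => hy0 i).1 (hyγ.trans hxγ.symm) i (mem_univ i)
    simp [hx, hy]

theorem IsMinOn.isWardrop (h : IsMinOn (c ⬝ᵥ ·) (scaledSimplex ι γ) x)
    (hx : x ∈ scaledSimplex ι γ) : IsWardrop c x := by
  intro i hi j
  -- move the whole flow of `i` onto `j`
  set y := x + Pi.single j (x i) - Pi.single i (x i)
  have hy : y ∈ scaledSimplex ι γ := by
    refine ⟨fun k => ?_, ?_⟩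
    · have := hx.1 k
      simp only [y, Pi.add_apply, Pi.sub_apply, Pi.single_apply]
      split_ifs <;> subst_vars <;> linarith
    · simp [y, sum_sub_distrib, sum_add_distrib, hx.2]
  have hcy : c ⬝ᵥ x ≤ c ⬝ᵥ x + (c j - c i) * x i := by
    have : c ⬝ᵥ x ≤ c ⬝ᵥ y := h hy
    rwa [dotProduct_sub, dotProduct_add, dotProduct_single, dotProduct_single, add_sub_assoc,
      ← sub_mul] at this
  exact sub_nonneg.1 (nonneg_of_mul_nonneg_left (le_add_iff_nonneg_right _ |>.1 hcy) hi)

theorem isWardrop_iff_isMinOn (hx : x ∈ scaledSimplex ι γ) :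
    IsWardrop c x ↔ IsMinOn (c ⬝ᵥ ·) (scaledSimplex ι γ) x :=
  ⟨fun h => h.isMinOn hx, fun h => h.isWardrop hx⟩

end Simplex

theorem isMinOn_prod_add_iff {α β M : Type*} [AddCommMonoid M] [PartialOrder M]
    [IsOrderedCancelAddMonoid M] {f : α → M} {g : β → M} {s : Set α} {t : Set β}
    {z : α × β} (hz : z ∈ s ×ˢ t) :
    IsMinOn (fun z => f z.1 + g z.2) (s ×ˢ t) z ↔ IsMinOn f s z.1 ∧ IsMinOn g t z.2 := by
  refine ⟨fun h => ⟨fun x hx => ?_, fun y hy => ?_⟩, fun ⟨hf, hg⟩ => ?_⟩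
  · exact le_of_add_le_add_right (h (Set.mk_mem_prod hx hz.2))
  · exact le_of_add_le_add_left (h (Set.mk_mem_prod hz.1 hy))
  · exact ((hf.on_preimage Prod.fst).on_subset fun _ h => h.1).add
      ((hg.on_preimage Prod.snd).on_subset fun _ h => h.2)

theorem ConvexOn.isMinOn_iff_lineDeriv_nonneg {E : Type*} [AddCommGroup E] [Module ℝ E]
    {s : Set E} {f f' : E → ℝ} {x : E} (hf : ConvexOn ℝ s f) (hx : x ∈ s)
    (hf' : ∀ y ∈ s, HasLineDerivAt ℝ f (f' (y - x)) x (y - x)) :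
    IsMinOn f s x ↔ ∀ y ∈ s, 0 ≤ f' (y - x) := by
  refine ⟨fun hmin y hy => ?_, fun h y hy => ?_⟩
  · refine ge_of_tendsto (hf' y hy).tendsto_slope_zero_right ?_
    filter_upwards [Ioo_mem_nhdsGT zero_lt_one] with t ⟨ht0, ht1⟩
    have := hmin (hf.1.add_smul_sub_mem hx hy ⟨ht0.le, ht1.le⟩)
    exact smul_nonneg (inv_nonneg.2 ht0.le) (sub_nonneg.2 this)
  · have hle : f' (y - x) ≤ f y - f x := by
      refine le_of_tendsto (hf' y hy).tendsto_slope_zero_right ?_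
      filter_upwards [Ioo_mem_nhdsGT zero_lt_one] with t ⟨ht0, ht1⟩
      have hconv := hf.2 hx hy (sub_nonneg.2 ht1.le) ht0.le (sub_add_cancel 1 t)
      rw [show (1 - t) • x + t • y = x + t • (y - x) by module, smul_eq_mul, smul_eq_mul]
        at hconv
      rw [smul_eq_mul, inv_mul_le_iff₀ ht0]
      linarith
    exact show f x ≤ f y by linarith [h y hy]

theorem sum_mul_sum_filter_mem {α ι R : Type*} [Fintype α] [Fintype ι] [CommSemiring R]
    (uses : ι → Finset α) (a : α → R) (x : ι → R) :
    ∑ l, a l * ∑ i ∈ univ.filter (fun i => l ∈ uses i), x i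
      = ∑ i, (∑ l ∈ uses i, a l) * x i := by
  simp only [mul_sum, sum_mul]
  exact sum_comm' (by simp)

theorem hasDerivAt_sum_mul_sq_div {α : Type*} [Fintype α] (d c z z' : α → ℝ) :
    HasDerivAt (fun t : ℝ => ∑ l, d l * (z l + t * z' l) ^ 2 / (2 * c l))
      (∑ l, d l * z l / c l * z' l) 0 := by
  refine HasDerivAt.fun_sum fun l _ => ?_
  refine ((((hasDerivAt_mul_const (z' l)).const_add (z l)).fun_pow 2).const_mul (d l)
    |>.div_const (2 * c l)).congr_deriv ?_
  simp only [Nat.cast_ofNat, zero_mul, add_zero, Nat.add_one_sub_one, pow_one]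
  ring

theorem hasLineDerivAt_potential {A P R : Type*} [Fintype A] [Fintype P] [Fintype R]
    {usesP : P → Finset A} {usesR : R → Finset A} {d c : A → ℝ}
    {G : (P → ℝ) → P → ℝ} {Y : P → ℝ} {Ψ : (P → ℝ) → ℝ} {l1 l2 l3 : ℝ}
    {Z : (P → ℝ) × (R → ℝ) → A → ℝ} {CEV : (P → ℝ) × (R → ℝ) → P → ℝ}
    {CNCD : (P → ℝ) × (R → ℝ) → R → ℝ} {Φ : (P → ℝ) × (R → ℝ) → ℝ} (hl1 : l1 ≠ 0)
    (hZ : ∀ w l, Z w l =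
      (∑ p ∈ Finset.univ.filter fun p => l ∈ usesP p, w.1 p) +
        ∑ r ∈ Finset.univ.filter fun r => l ∈ usesR r, w.2 r)
    (hCEV : ∀ w p, CEV w p =
      l1 * (∑ l ∈ usesP p, d l * Z w l / c l) + l2 * G w.1 p + l3 * Y p)
    (hCNCD : ∀ w r, CNCD w r = l1 * ∑ l ∈ usesR r, d l * Z w l / c l)
    (hΦ : ∀ w, Φ w = (∑ l, d l * Z w l ^ 2 / (2 * c l)) +
      (l2 / l1) * Ψ w.1 + (l3 / l1) * ∑ p, Y p * w.1 p)
    {w : (P → ℝ) × (R → ℝ)} {Lq : (P → ℝ) →L[ℝ] ℝ} (hΨ : HasFDerivAt Ψ Lq w.1)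
    (hLq : ∀ v, Lq v = G w.1 ⬝ᵥ v) (v : (P → ℝ) × (R → ℝ)) :
    HasLineDerivAt ℝ Φ (l1⁻¹ * (CEV w ⬝ᵥ v.1 + CNCD w ⬝ᵥ v.2)) w v := by
  have hZ_line : ∀ (t : ℝ) l, Z (w + t • v) l = Z w l + t * Z v l := fun t l => by
    simp only [hZ, Prod.fst_add, Prod.snd_add, Prod.smul_fst, Prod.smul_snd, Pi.add_apply,
      Pi.smul_apply, smul_eq_mul, sum_add_distrib, ← mul_sum]
    ring
  have hlink : HasDerivAt (fun t : ℝ => ∑ l, d l * Z (w + t • v) l ^ 2 / (2 * c l))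
      (∑ l, d l * Z w l / c l * Z v l) 0 := by
    simpa only [hZ_line] using hasDerivAt_sum_mul_sq_div d c (Z w) (Z v)
  have hΨ_line : HasDerivAt (fun t : ℝ => Ψ (w + t • v).1) (G w.1 ⬝ᵥ v.1) 0 :=
    hLq v.1 ▸ hΨ.hasLineDerivAt v.1
  have hY_line : HasDerivAt (fun t : ℝ => Y ⬝ᵥ (w + t • v).1) (Y ⬝ᵥ v.1) 0 := by
    simpa only [Prod.fst_add, Prod.smul_fst, dotProduct_add, dotProduct_smul, smul_eq_mul]
      using (hasDerivAt_mul_const (Y ⬝ᵥ v.1)).const_add (Y ⬝ᵥ w.1)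
  have hlink_eq : ∑ l, d l * Z w l / c l * Z v l
      = (fun p => ∑ l ∈ usesP p, d l * Z w l / c l) ⬝ᵥ v.1
        + (fun r => ∑ l ∈ usesR r, d l * Z w l / c l) ⬝ᵥ v.2 := by
    simp only [hZ v, mul_add, sum_add_distrib, sum_mul_sum_filter_mem]
    rfl
  unfold HasLineDerivAt
  convert (hlink.fun_add (hΨ_line.const_mul (l2 / l1))).fun_add (hY_line.const_mul (l3 / l1))
    using 1
  · exact funext fun t => hΦ _
  · have hCEV_w :
        CEV w = l1 • (fun p => ∑ l ∈ usesP p, d l * Z w l / c l) + l2 • G w.1 + l3 • Y :=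
      funext fun p => hCEV w p
    have hCNCD_w : CNCD w = l1 • fun r => ∑ l ∈ usesR r, d l * Z w l / c l :=
      funext fun r => hCNCD w r
    rw [hlink_eq, hCEV_w, hCNCD_w]
    simp only [add_dotProduct, smul_dotProduct, smul_eq_mul]
    field_simp
    ring

theorem coupled_wardrop_iff_potential_min_general {A P R : Type*}
    [Fintype A] [Fintype P] [Fintype R]
    (usesP : P → Finset A) (usesR : R → Finset A)
    (d c : A → ℝ)
    (G : (P → ℝ) → P → ℝ) (Y : P → ℝ) (Ψ : (P → ℝ) → ℝ)
    (l1 l2 l3 : ℝ) (hl1 : 0 < l1)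
    (γ γ0 : ℝ)
    (Z : (P → ℝ) × (R → ℝ) → A → ℝ)
    (hZ : ∀ w l, Z w l =
      (∑ p ∈ Finset.univ.filter fun p => l ∈ usesP p, w.1 p) +
        ∑ r ∈ Finset.univ.filter fun r => l ∈ usesR r, w.2 r)
    (CEV : (P → ℝ) × (R → ℝ) → P → ℝ)
    (hCEV : ∀ w p, CEV w p =
      l1 * (∑ l ∈ usesP p, d l * Z w l / c l) + l2 * G w.1 p + l3 * Y p)
    (CNCD : (P → ℝ) × (R → ℝ) → R → ℝ)
    (hCNCD : ∀ w r, CNCD w r = l1 * ∑ l ∈ usesR r, d l * Z w l / c l)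
    (K : Set ((P → ℝ) × (R → ℝ)))
    (hK : K = {w | (∀ p, 0 ≤ w.1 p) ∧ (∑ p, w.1 p) = γ ∧
                   (∀ r, 0 ≤ w.2 r) ∧ (∑ r, w.2 r) = γ0})
    (Φ : (P → ℝ) × (R → ℝ) → ℝ)
    (hΦ : ∀ w, Φ w = (∑ l, d l * Z w l ^ 2 / (2 * c l)) +
      (l2 / l1) * Ψ w.1 + (l3 / l1) * ∑ p, Y p * w.1 p)
    (hΨgrad : ∀ q : P → ℝ, ∃ Lq : (P → ℝ) →L[ℝ] ℝ,
      HasFDerivAt Ψ Lq q ∧ ∀ v, Lq v = ∑ p, G q p * v p)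
    (hconv : ConvexOn ℝ K Φ) :
    ∀ w ∈ K,
      ((∀ p, 0 < w.1 p → ∀ p', CEV w p ≤ CEV w p') ∧
        (∀ r, 0 < w.2 r → ∀ r', CNCD w r ≤ CNCD w r')) ↔
        (∀ w' ∈ K, Φ w ≤ Φ w') := by
  have hK_prod : K = scaledSimplex P γ ×ˢ scaledSimplex R γ0 :=
    hK.trans (Set.ext fun _ => and_assoc.symm)
  subst hK_prod
  intro w hw
  obtain ⟨Lq, hΨ, hLq⟩ := hΨgrad w.1
  have hgrad := hasLineDerivAt_potential hl1.ne' hZ hCEV hCNCD hΦ hΨ hLq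
  change IsWardrop (CEV w) w.1 ∧ IsWardrop (CNCD w) w.2 ↔ IsMinOn Φ _ w
  rw [isWardrop_iff_isMinOn hw.1, isWardrop_iff_isMinOn hw.2, ← isMinOn_prod_add_iff hw,
    hconv.isMinOn_iff_lineDeriv_nonneg hw
      (f' := fun v => l1⁻¹ * (CEV w ⬝ᵥ v.1 + CNCD w ⬝ᵥ v.2)) fun y _ => hgrad (y - w)]
  simp only [isMinOn_iff, Prod.fst_sub, Prod.snd_sub, dotProduct_sub,
    mul_nonneg_iff_of_pos_left (inv_pos.2 hl1), sub_add_sub_comm, sub_nonneg]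

/-- Potential characterization of the coupled two-population equilibrium: with
link costs `d_l (z_l + z⁰_l)/c_l` shared additively by EVs and NCDs, EV extended-
path costs `λ₁F + λ₂G + λ₃Y` (with `Y` constant and `G` depending only on EV
flows, with primitive `Ψ` whose gradient is `G`), and NCD route costs `λ₁F`, the
joint Wardrop equilibrium conditions of both populations are equivalent to
minimizing the single convex differentiable potential
`Φ = ∑_l d_l (z_l+z⁰_l)²/(2c_l) + (λ₂/λ₁)Ψ + (λ₃/λ₁)∑_p Y_p q_p`
over the product of the two demand simplices (for a convex differentiable
potential, the KKT/first-order optimality conditions hold exactly at the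
minimizers). -/
theorem coupled_wardrop_iff_potential_min {A P R : Type*}
    [Fintype A] [Fintype P] [Fintype R]
    (usesP : P → Finset A) (usesR : R → Finset A)
    (d c : A → ℝ) (hd : ∀ l, 0 ≤ d l) (hc : ∀ l, 0 < c l)
    (G : (P → ℝ) → P → ℝ) (Y : P → ℝ) (Ψ : (P → ℝ) → ℝ)
    (l1 l2 l3 : ℝ) (hl1 : 0 < l1) (hl2 : 0 ≤ l2) (hl3 : 0 ≤ l3)
    (γ γ0 : ℝ) (hγ : 0 < γ) (hγ0 : 0 < γ0)
    (Z : (P → ℝ) × (R → ℝ) → A → ℝ)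
    (hZ : ∀ w l, Z w l =
      (∑ p ∈ Finset.univ.filter fun p => l ∈ usesP p, w.1 p) +
        ∑ r ∈ Finset.univ.filter fun r => l ∈ usesR r, w.2 r)
    (CEV : (P → ℝ) × (R → ℝ) → P → ℝ)
    (hCEV : ∀ w p, CEV w p =
      l1 * (∑ l ∈ usesP p, d l * Z w l / c l) + l2 * G w.1 p + l3 * Y p)
    (CNCD : (P → ℝ) × (R → ℝ) → R → ℝ)
    (hCNCD : ∀ w r, CNCD w r = l1 * ∑ l ∈ usesR r, d l * Z w l / c l)
    (K : Set ((P → ℝ) × (R → ℝ)))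
    (hK : K = {w | (∀ p, 0 ≤ w.1 p) ∧ (∑ p, w.1 p) = γ ∧
                   (∀ r, 0 ≤ w.2 r) ∧ (∑ r, w.2 r) = γ0})
    (Φ : (P → ℝ) × (R → ℝ) → ℝ)
    (hΦ : ∀ w, Φ w = (∑ l, d l * Z w l ^ 2 / (2 * c l)) +
      (l2 / l1) * Ψ w.1 + (l3 / l1) * ∑ p, Y p * w.1 p)
    (hΨgrad : ∀ q : P → ℝ, ∃ Lq : (P → ℝ) →L[ℝ] ℝ,
      HasFDerivAt Ψ Lq q ∧ ∀ v, Lq v = ∑ p, G q p * v p)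
    (hconv : ConvexOn ℝ K Φ) :
    ∀ w ∈ K,
      ((∀ p, 0 < w.1 p → ∀ p', CEV w p ≤ CEV w p') ∧
        (∀ r, 0 < w.2 r → ∀ r', CNCD w r ≤ CNCD w r')) ↔
        (∀ w' ∈ K, Φ w ≤ Φ w') :=
  coupled_wardrop_iff_potential_min_general usesP usesR d c G Y Ψ l1 l2 l3 hl1 γ γ0 Z hZ CEV hCEV
    CNCD hCNCD K hK Φ hΦ hΨgrad hconv
end
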